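/- arXiv:2001.08959 — 6 statements merged into one kernel-verified Lean document; each statement's English description precedes it below -/
import Mathlib

section
/- For every pair of complex numbers x, y with |x| = 1 and |y| = 1, the N×N complex matrix L(x,y) whose (k,k)-entry is D_k(x,y) and whose (k,m)-entry for m ≠ k is −θ_{k,m} A_{k,m}(x,y) is non-singular, i.e. det L(x,y) ≠ 0. -/
/-!
On the torus `|x| = |y| = 1` the matrix `L(x,y)` is strictly diagonally dominant by rows, hence
non-singular by the Levy–Desplanques (Gershgorin) theorem. Indeed `Re D_k ≥ θ_{k,·}`, since each
term `q (1 - xⁱ yʲ)` has nonnegative real part, while `|θ_{k,m} A_{k,m}| ≤ θ_{k,m}`, since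
`A_{k,m}` is a probability generating function; and the off-diagonal weights
`∑_{m ≠ 0, k} θ_{k,m}` miss the positive weight `θ_{k,0}` of `θ_{k,·}`.
-/

open Finset

lemma Complex.re_tsum_nonneg {ι : Type*} {f : ι → ℂ} (hf : ∀ i, 0 ≤ (f i).re) :
    0 ≤ (∑' i, f i).re := by
  by_cases hs : Summable f
  · rw [Complex.re_tsum hs]
    exact tsum_nonneg hf
  · simp [tsum_eq_zero_of_not_summable hs]

lemma Complex.re_ofReal_mul_one_sub_nonneg {r : ℝ} (hr : 0 ≤ r) {w : ℂ} (hw : ‖w‖ ≤ 1) :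
    0 ≤ ((r : ℂ) * (1 - w)).re := by
  rw [Complex.re_ofReal_mul, Complex.sub_re, Complex.one_re]
  exact mul_nonneg hr (by linarith [(Complex.re_le_norm w).trans hw])

lemma norm_tsum_ofReal_mul_le_one {ι : Type*} {a : ι → ℝ} (ha : ∀ i, 0 ≤ a i)
    (hsum : ∑' i, a i = 1) {z : ι → ℂ} (hz : ∀ i, ‖z i‖ ≤ 1) :
    ‖∑' i, (a i : ℂ) * z i‖ ≤ 1 := by
  have hs : Summable a := by
    by_contra h
    simp [tsum_eq_zero_of_not_summable h] at hsum
  refine tsum_of_norm_bounded (hsum ▸ hs.hasSum) fun i => ?_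
  rw [norm_mul, Complex.norm_of_nonneg (ha i)]
  exact mul_le_of_le_one_right (ha i) (hz i)

lemma norm_pow_mul_pow_le_one {x y : ℂ} (hx : ‖x‖ ≤ 1) (hy : ‖y‖ ≤ 1) (i j : ℕ) :
    ‖x ^ i * y ^ j‖ ≤ 1 := by
  rw [norm_mul, norm_pow, norm_pow]
  exact mul_le_one₀ (pow_le_one₀ (norm_nonneg x) hx) (by positivity)
    (pow_le_one₀ (norm_nonneg y) hy)

lemma sum_erase_succ_eq_add_sum_erase {G : Type*} [AddCommGroup G] {N : ℕ} (f : ℕ → G)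
    (i : Fin N) :
    ∑ m ∈ (range (N + 1)).erase (i.1 + 1), f m = f 0 + ∑ j ∈ univ.erase i, f (j.1 + 1) := by
  rw [sum_erase_eq_sub (by simp), sum_erase_eq_sub (mem_univ i), sum_range_succ',
    Fin.sum_univ_eq_sum_range (fun j => f (j + 1))]
  abel

theorem stmt_1_general (N : ℕ)
    (θ : ℕ → ℕ → ℝ)
    (hθnn : ∀ k ∈ Finset.Icc 1 N, ∀ m ∈ Finset.range (N + 1), m ≠ k → 0 ≤ θ k m)
    (hθ0 : ∀ k ∈ Finset.Icc 1 N, 0 < θ k 0)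
    (θdot : ℕ → ℝ)
    (hθdot : ∀ k, θdot k = ∑ m ∈ (Finset.range (N + 1)).erase k, θ k m)
    (q : ℕ → ℕ × ℕ → ℝ)
    (hqnn : ∀ k p, 0 ≤ q k p)
    (D : ℕ → ℂ → ℂ → ℂ)
    (hD : ∀ k x y, D k x y =
      (∑' p : ℕ × ℕ, if p ≠ (0, 0) then (q k p : ℂ) * (1 - x ^ p.1 * y ^ p.2) else 0)
        + (θdot k : ℂ))
    (a : ℕ → ℕ → ℕ × ℕ → ℝ)
    (hann : ∀ k m p, 0 ≤ a k m p)
    (hasum : ∀ k m, (∑' p : ℕ × ℕ, a k m p) = 1)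
    (A : ℕ → ℕ → ℂ → ℂ → ℂ)
    (hA : ∀ k m x y, A k m x y = ∑' p : ℕ × ℕ, (a k m p : ℂ) * x ^ p.1 * y ^ p.2)
    (x y : ℂ) (hx : ‖x‖ = 1) (hy : ‖y‖ = 1) :
    Matrix.det (Matrix.of fun i j : Fin N =>
      if i = j then D (i.1 + 1) x y
      else -((θ (i.1 + 1) (j.1 + 1) : ℂ) * A (i.1 + 1) (j.1 + 1) x y)) ≠ 0 := by
  have hxy := norm_pow_mul_pow_le_one hx.le hy.le
  refine det_ne_zero_of_sum_row_lt_diag fun i => ?_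
  have hk : i.1 + 1 ∈ Icc 1 N := by simp
  have hA_le : ∀ m, ‖A (i.1 + 1) m x y‖ ≤ 1 := fun m => by
    simp_rw [hA, mul_assoc]
    exact norm_tsum_ofReal_mul_le_one (hann _ m) (hasum _ m) fun p => hxy p.1 p.2
  have hD_re : θdot (i.1 + 1) ≤ (D (i.1 + 1) x y).re := by
    rw [hD, Complex.add_re, Complex.ofReal_re, le_add_iff_nonneg_left]
    refine Complex.re_tsum_nonneg fun p => ?_
    split_ifs
    · exact Complex.re_ofReal_mul_one_sub_nonneg (hqnn _ p) (hxy p.1 p.2)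
    · simp
  simp only [Matrix.of_apply, if_true]
  calc ∑ j ∈ univ.erase i, ‖if i = j then D (i.1 + 1) x y
          else -((θ (i.1 + 1) (j.1 + 1) : ℂ) * A (i.1 + 1) (j.1 + 1) x y)‖
      ≤ ∑ j ∈ univ.erase i, θ (i.1 + 1) (j.1 + 1) := sum_le_sum fun j hj => by
        have hji : i ≠ j := (ne_of_mem_erase hj).symm
        have hθ := hθnn _ hk (j.1 + 1) (by simp) (by simpa [Fin.ext_iff] using hji.symm)
        rw [if_neg hji, norm_neg, norm_mul, Complex.norm_of_nonneg hθ]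
        exact mul_le_of_le_one_right hθ (hA_le _)
    _ < θdot (i.1 + 1) := by
        rw [hθdot, sum_erase_succ_eq_add_sum_erase]
        linarith [hθ0 _ hk]
    _ ≤ ‖D (i.1 + 1) x y‖ := hD_re.trans (Complex.re_le_norm _)

/-- For `|x| = |y| = 1`, the `N×N` matrix `L(x,y)` with diagonal entries
`D_k(x,y)` and off-diagonal entries `−θ_{k,m} A_{k,m}(x,y)` (indices `k,m ∈ {1,…,N}`)
is non-singular: `det L(x,y) ≠ 0`. -/
theorem stmt_1 (N : ℕ) (hN : 1 ≤ N)
    (θ : ℕ → ℕ → ℝ)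
    (hθnn : ∀ k ∈ Finset.Icc 1 N, ∀ m ∈ Finset.range (N + 1), m ≠ k → 0 ≤ θ k m)
    (hθ0 : ∀ k ∈ Finset.Icc 1 N, 0 < θ k 0)
    (θdot : ℕ → ℝ)
    (hθdot : ∀ k, θdot k = ∑ m ∈ (Finset.range (N + 1)).erase k, θ k m)
    (q : ℕ → ℕ × ℕ → ℝ)
    (hqsum : ∀ k, Summable (q k))
    (hqnn : ∀ k p, 0 ≤ q k p)
    (D : ℕ → ℂ → ℂ → ℂ)
    (hD : ∀ k x y, D k x y =
      (∑' p : ℕ × ℕ, if p ≠ (0, 0) then (q k p : ℂ) * (1 - x ^ p.1 * y ^ p.2) else 0)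
        + (θdot k : ℂ))
    (a : ℕ → ℕ → ℕ × ℕ → ℝ)
    (hann : ∀ k m p, 0 ≤ a k m p)
    (hasum : ∀ k m, (∑' p : ℕ × ℕ, a k m p) = 1)
    (A : ℕ → ℕ → ℂ → ℂ → ℂ)
    (hA : ∀ k m x y, A k m x y = ∑' p : ℕ × ℕ, (a k m p : ℂ) * x ^ p.1 * y ^ p.2)
    (x y : ℂ) (hx : ‖x‖ = 1) (hy : ‖y‖ = 1) :
    Matrix.det (Matrix.of fun i j : Fin N =>
      if i = j then D (i.1 + 1) x y
      else -((θ (i.1 + 1) (j.1 + 1) : ℂ) * A (i.1 + 1) (j.1 + 1) x y)) ≠ 0 :=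
  stmt_1_general N θ hθnn hθ0 θdot hθdot q hqnn D hD a hann hasum A hA x y hx hy
end

section
/- For every complex x with |x| = 1 and x ≠ 1, the function y ↦ G_0(x,y) := f(x,y) − g(x,y) has exactly one zero in the open unit disc; that is, there exists a unique complex number y with |y| < 1 such that f(x,y) = g(x,y). -/
/-!
Dividing by `C(x) = θ + Σ q_{i,0} (1 - x^i) + S`, whose real part is at least `θ + S`, turns
`f(x,y) = g(x,y)` into the fixed-point equation `y = h(y) := g(x,y) / C(x)`. On the unit disc
`h` is holomorphic with `|h| ≤ S / (θ + S) < 1`. A holomorphic map of the disc into a disc of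
radius `r < 1` contracts the pseudo-hyperbolic distance `|(a - z) / (1 - conj a * z)|` by the
factor `2r / (1 + r²) < 1` (Schwarz–Pick for `h / r`, then rescaling by `r`), so the iterates of
`h` starting at `0` converge to a fixed point, and it is the only one in the disc.
-/

open Complex ComplexConjugate Metric Set Filter

noncomputable def mobius (a z : ℂ) : ℂ := (a - z) / (1 - conj a * z)

section Mobius

variable {a z : ℂ}

lemma one_sub_conj_mul_ne_zero (ha : ‖a‖ < 1) (hz : ‖z‖ ≤ 1) : 1 - conj a * z ≠ 0 := by
  refine sub_ne_zero.2 fun h => ?_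
  have : ‖conj a * z‖ < 1 := by
    rw [norm_mul, norm_conj]
    exact mul_lt_one_of_nonneg_of_lt_one_left (norm_nonneg a) ha hz
  rw [← h, norm_one] at this
  exact this.false

lemma normSq_one_sub_conj_mul_sub_normSq_sub (a z : ℂ) :
    normSq (1 - conj a * z) - normSq (a - z) = (1 - normSq a) * (1 - normSq z) := by
  simp only [normSq_apply, sub_re, sub_im, mul_re, mul_im, conj_re, conj_im, one_re, one_im]
  ring

lemma norm_mobius_lt_one (ha : ‖a‖ < 1) (hz : ‖z‖ < 1) : ‖mobius a z‖ < 1 := by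
  have hd := one_sub_conj_mul_ne_zero ha hz.le
  rw [mobius, norm_div, div_lt_one (norm_pos_iff.2 hd), ← sq_lt_sq₀ (norm_nonneg _)
    (norm_nonneg _), Complex.sq_norm, Complex.sq_norm, ← sub_pos,
    normSq_one_sub_conj_mul_sub_normSq_sub, ← Complex.sq_norm, ← Complex.sq_norm]
  have ha2 : ‖a‖ ^ 2 < 1 := pow_lt_one₀ (norm_nonneg a) ha two_ne_zero
  have hz2 : ‖z‖ ^ 2 < 1 := pow_lt_one₀ (norm_nonneg z) hz two_ne_zero
  exact mul_pos (sub_pos.2 ha2) (sub_pos.2 hz2)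

lemma mapsTo_mobius (ha : ‖a‖ < 1) : MapsTo (mobius a) (ball 0 1) (ball 0 1) := fun z hz => by
  rw [mem_ball_zero_iff] at hz ⊢
  exact norm_mobius_lt_one ha hz

@[simp] lemma mobius_self (a : ℂ) : mobius a a = 0 := by simp [mobius]

@[simp] lemma mobius_zero_right (a : ℂ) : mobius a 0 = a := by simp [mobius]

lemma mobius_mobius (ha : ‖a‖ < 1) (hz : ‖z‖ < 1) : mobius a (mobius a z) = z := by
  have hz' := one_sub_conj_mul_ne_zero ha hz.le
  have ha' := one_sub_conj_mul_ne_zero ha ha.le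
  have hden : 1 - conj a * mobius a z = (1 - conj a * a) / (1 - conj a * z) := by
    rw [mobius]; field_simp; ring
  have hnum : a - mobius a z = z * ((1 - conj a * a) / (1 - conj a * z)) := by
    rw [mobius, mul_div_assoc', eq_div_iff hz', sub_mul, div_mul_cancel₀ _ hz']; ring
  rw [mobius, hden, hnum, mul_div_cancel_right₀ _ (div_ne_zero ha' hz')]

lemma differentiableOn_mobius (ha : ‖a‖ < 1) : DifferentiableOn ℂ (mobius a) (ball 0 1) :=
  ((differentiableOn_const a).sub differentiableOn_id).div
    ((differentiableOn_const 1).sub (differentiableOn_id.const_mul _))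
    fun _ hw => one_sub_conj_mul_ne_zero ha (mem_ball_zero_iff.1 hw).le

lemma norm_sub_le_two_mul_norm_mobius (ha : ‖a‖ < 1) (hz : ‖z‖ ≤ 1) :
    ‖a - z‖ ≤ 2 * ‖mobius a z‖ := by
  have hd : ‖1 - conj a * z‖ ≤ 2 := by
    calc ‖1 - conj a * z‖ ≤ 1 + ‖a‖ * ‖z‖ := by
          simpa [norm_mul] using norm_sub_le (1 : ℂ) (conj a * z)
      _ ≤ 2 := by nlinarith [norm_nonneg a, norm_nonneg z]
  calc ‖a - z‖ = ‖mobius a z‖ * ‖1 - conj a * z‖ := by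
        rw [mobius, norm_div, div_mul_cancel₀ _ (norm_ne_zero_iff.2
          (one_sub_conj_mul_ne_zero ha hz))]
    _ ≤ 2 * ‖mobius a z‖ := by nlinarith [norm_nonneg (mobius a z)]

end Mobius

theorem norm_mobius_le_of_mapsTo_ball {G : ℂ → ℂ} (hd : DifferentiableOn ℂ G (ball 0 1))
    (hG : MapsTo G (ball 0 1) (ball 0 1)) {a b : ℂ} (ha : ‖a‖ < 1) (hb : ‖b‖ < 1) :
    ‖mobius (G b) (G a)‖ ≤ ‖mobius b a‖ := by
  have hGb : ‖G b‖ < 1 := mem_ball_zero_iff.1 (hG (mem_ball_zero_iff.2 hb))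
  have h := Complex.norm_le_norm_of_mapsTo_ball (f := mobius (G b) ∘ G ∘ mobius b)
    ((differentiableOn_mobius hGb).comp (hd.comp (differentiableOn_mobius hb) (mapsTo_mobius hb))
      (hG.comp (mapsTo_mobius hb)))
    (((mapsTo_mobius hGb).comp (hG.comp (mapsTo_mobius hb))).mono_right ball_subset_closedBall)
    (by simp) (norm_mobius_lt_one hb ha)
  rwa [Function.comp_apply, Function.comp_apply, mobius_mobius hb ha] at h

lemma one_add_sq_mul_norm_one_sub_le {r : ℝ} (hr0 : 0 ≤ r) (hr1 : r ≤ 1) {w : ℂ} (hw : ‖w‖ ≤ 1) :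
    (1 + r ^ 2) * ‖1 - w‖ ≤ 2 * ‖1 - (r : ℂ) ^ 2 * w‖ := by
  have hw2 : normSq w ≤ 1 := by rw [← Complex.sq_norm]; exact pow_le_one₀ (norm_nonneg w) hw
  have hr4 : r ^ 4 ≤ 1 := pow_le_one₀ hr0 hr1
  have key : 4 * normSq (1 - (r : ℂ) ^ 2 * w) - (1 + r ^ 2) ^ 2 * normSq (1 - w)
      = (1 - r ^ 2) ^ 2 * normSq (1 + w) + 2 * (1 - r ^ 4) * (1 - normSq w) := by
    simp only [normSq_apply, sub_re, sub_im, add_re, add_im, one_re, one_im, ← ofReal_pow,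
      re_ofReal_mul, im_ofReal_mul]
    ring
  have hsq : ((1 + r ^ 2) * ‖1 - w‖) ^ 2 ≤ (2 * ‖1 - (r : ℂ) ^ 2 * w‖) ^ 2 := by
    rw [mul_pow, mul_pow, Complex.sq_norm, Complex.sq_norm]
    nlinarith [mul_nonneg (sq_nonneg (1 - r ^ 2)) (normSq_nonneg (1 + w)),
      mul_nonneg (sub_nonneg.2 hr4) (sub_nonneg.2 hw2)]
  exact (pow_le_pow_iff_left₀ (by positivity) (by positivity) two_ne_zero).1 hsq

lemma norm_mobius_ofReal_mul_le {r : ℝ} (hr0 : 0 ≤ r) (hr1 : r ≤ 1) {p q : ℂ}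
    (hp : ‖p‖ < 1) (hq : ‖q‖ < 1) :
    ‖mobius (r * q) (r * p)‖ ≤ 2 * r / (1 + r ^ 2) * ‖mobius q p‖ := by
  have hw : ‖conj q * p‖ < 1 := by
    rw [norm_mul, norm_conj]; exact mul_lt_one_of_nonneg_of_lt_one_left (norm_nonneg q) hq hp.le
  have hd : 0 < ‖1 - conj q * p‖ := norm_pos_iff.2 (one_sub_conj_mul_ne_zero hq hp.le)
  have hrd : 0 < ‖1 - (r : ℂ) ^ 2 * (conj q * p)‖ := by
    refine norm_pos_iff.2 (sub_ne_zero.2 fun h => ?_)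
    have : ‖(r : ℂ) ^ 2 * (conj q * p)‖ < 1 := by
      rw [norm_mul, norm_pow, norm_real, Real.norm_of_nonneg hr0]
      exact mul_lt_one_of_nonneg_of_lt_one_right (pow_le_one₀ hr0 hr1) (norm_nonneg _) hw
    rw [← h, norm_one] at this
    exact this.false
  have hscaled : mobius (r * q) (r * p) = r * (q - p) / (1 - (r : ℂ) ^ 2 * (conj q * p)) := by
    rw [mobius, map_mul, conj_ofReal]; ring
  rw [hscaled, mobius, norm_div, norm_div, norm_mul, norm_real, Real.norm_of_nonneg hr0,
    div_mul_div_comm, div_le_div_iff₀ hrd (by positivity)]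
  calc r * ‖q - p‖ * ((1 + r ^ 2) * ‖1 - conj q * p‖)
      ≤ r * ‖q - p‖ * (2 * ‖1 - (r : ℂ) ^ 2 * (conj q * p)‖) :=
        mul_le_mul_of_nonneg_left (one_add_sq_mul_norm_one_sub_le hr0 hr1 hw.le)
          (by positivity)
    _ = 2 * r * ‖q - p‖ * ‖1 - (r : ℂ) ^ 2 * (conj q * p)‖ := by ring

theorem norm_mobius_le_of_mapsTo_ball_radius {h : ℂ → ℂ} {r : ℝ} (hr0 : 0 < r) (hr1 : r ≤ 1)
    (hd : DifferentiableOn ℂ h (ball 0 1)) (hh : MapsTo h (ball 0 1) (ball 0 r)) {a b : ℂ}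
    (ha : ‖a‖ < 1) (hb : ‖b‖ < 1) :
    ‖mobius (h b) (h a)‖ ≤ 2 * r / (1 + r ^ 2) * ‖mobius b a‖ := by
  set G : ℂ → ℂ := fun z => h z / r
  have hG : MapsTo G (ball 0 1) (ball 0 1) := fun z hz => by
    rw [mem_ball_zero_iff, norm_div, norm_real, Real.norm_of_nonneg hr0.le, div_lt_one hr0]
    exact mem_ball_zero_iff.1 (hh hz)
  have hGa := mem_ball_zero_iff.1 (hG (mem_ball_zero_iff.2 ha))
  have hGb := mem_ball_zero_iff.1 (hG (mem_ball_zero_iff.2 hb))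
  have hhG : ∀ z, h z = r * G z := fun z => by
    rw [mul_div_cancel₀ _ (ofReal_ne_zero.2 hr0.ne')]
  calc ‖mobius (h b) (h a)‖ ≤ 2 * r / (1 + r ^ 2) * ‖mobius (G b) (G a)‖ := by
        rw [hhG, hhG]; exact norm_mobius_ofReal_mul_le hr0.le hr1 hGa hGb
    _ ≤ 2 * r / (1 + r ^ 2) * ‖mobius b a‖ := by
        gcongr; exact norm_mobius_le_of_mapsTo_ball (hd.div_const _) hG ha hb

lemma cauchySeq_of_norm_mobius_le_geometric {Y : ℕ → ℂ} {C K : ℝ} (hK : K < 1)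
    (hY : ∀ n, ‖Y n‖ < 1) (hρ : ∀ n, ‖mobius (Y n) (Y (n + 1))‖ ≤ C * K ^ n) : CauchySeq Y :=
  cauchySeq_of_le_geometric K (2 * C) hK fun n => by
    rw [dist_eq_norm, mul_assoc]
    exact (norm_sub_le_two_mul_norm_mobius (hY n) (hY (n + 1)).le).trans
      (mul_le_mul_of_nonneg_left (hρ n) two_pos.le)

lemma exists_fixedPoint_of_norm_mobius_le {h : ℂ → ℂ} {s K : ℝ} (hs : s < 1) (hK0 : 0 ≤ K)
    (hK1 : K < 1) (hc : ContinuousOn h (ball 0 1)) (hh : MapsTo h (ball 0 1) (closedBall 0 s))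
    (hcontr : ∀ {a b : ℂ}, ‖a‖ < 1 → ‖b‖ < 1 → ‖mobius (h b) (h a)‖ ≤ K * ‖mobius b a‖) :
    ∃ y, ‖y‖ < 1 ∧ h y = y := by
  set Y : ℕ → ℂ := fun n => h^[n] 0
  have hYsucc (n : ℕ) : Y (n + 1) = h (Y n) := Function.iterate_succ_apply' h n 0
  have hYs (n : ℕ) (hn : ‖Y n‖ < 1) : ‖Y (n + 1)‖ ≤ s := by
    rw [hYsucc, ← mem_closedBall_zero_iff]; exact hh (mem_ball_zero_iff.2 hn)
  have hY (n : ℕ) : ‖Y n‖ < 1 := by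
    induction n with
    | zero => simp [Y]
    | succ n ih => exact (hYs n ih).trans_lt hs
  have hρ (n : ℕ) : ‖mobius (Y n) (Y (n + 1))‖ ≤ ‖mobius (Y 0) (Y 1)‖ * K ^ n := by
    induction n with
    | zero => simp
    | succ n ih =>
      calc ‖mobius (Y (n + 1)) (Y (n + 2))‖ ≤ K * ‖mobius (Y n) (Y (n + 1))‖ := by
            simpa only [hYsucc] using hcontr (hY (n + 1)) (hY n)
        _ ≤ ‖mobius (Y 0) (Y 1)‖ * K ^ (n + 1) := by
            rw [pow_succ]; nlinarith
  obtain ⟨L, hL⟩ := cauchySeq_tendsto_of_complete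
    (cauchySeq_of_norm_mobius_le_geometric hK1 hY hρ)
  have hLs : ‖L‖ ≤ s := by
    have hev : ∀ᶠ n in atTop, Y n ∈ closedBall 0 s :=
      eventually_atTop.2 ⟨1, fun n hn => by
        obtain ⟨k, rfl⟩ := Nat.exists_eq_add_of_le' hn
        exact mem_closedBall_zero_iff.2 (hYs k (hY k))⟩
    exact mem_closedBall_zero_iff.1 (isClosed_closedBall.mem_of_tendsto hL hev)
  have hL1 : ‖L‖ < 1 := hLs.trans_lt hs
  exact ⟨L, hL1, isFixedPt_of_tendsto_iterate hL
    (hc.continuousAt (isOpen_ball.mem_nhds (mem_ball_zero_iff.2 hL1)))⟩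

theorem existsUnique_fixedPoint_of_mapsTo_closedBall {h : ℂ → ℂ} {s : ℝ} (hs : s < 1)
    (hd : DifferentiableOn ℂ h (ball 0 1)) (hh : MapsTo h (ball 0 1) (closedBall 0 s)) :
    ∃! y, ‖y‖ < 1 ∧ h y = y := by
  obtain ⟨r, hsr, hr1⟩ := exists_between (max_lt hs one_pos)
  have hr0 : 0 < r := (le_max_right s 0).trans_lt hsr
  have hK1 : 2 * r / (1 + r ^ 2) < 1 := by
    rw [div_lt_one (by positivity)]; nlinarith [sq_pos_of_pos (sub_pos.2 hr1)]
  have hcontr {a b : ℂ} (ha : ‖a‖ < 1) (hb : ‖b‖ < 1) :=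
    norm_mobius_le_of_mapsTo_ball_radius hr0 hr1.le hd
      (hh.mono_right (closedBall_subset_ball ((le_max_left s 0).trans_lt hsr))) ha hb
  obtain ⟨y, hy1, hy⟩ := exists_fixedPoint_of_norm_mobius_le hs (by positivity) hK1
    hd.continuousOn hh hcontr
  refine ⟨y, ⟨hy1, hy⟩, fun z ⟨hz1, hz⟩ => ?_⟩
  have hyz : ‖mobius y z‖ ≤ 2 * r / (1 + r ^ 2) * ‖mobius y z‖ := by
    simpa only [hy, hz] using hcontr hz1 hy1
  have : ‖y - z‖ ≤ 0 := by
    nlinarith [norm_sub_le_two_mul_norm_mobius hy1 hz1.le, norm_nonneg (mobius y z)]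
  exact (sub_eq_zero.1 (norm_le_zero_iff.1 this)).symm

section RateSeries

variable {ι : Type*}

lemma norm_pow_le_one {z : ℂ} (hz : ‖z‖ ≤ 1) (n : ℕ) : ‖z ^ n‖ ≤ 1 := by
  rw [norm_pow]; exact pow_le_one₀ (norm_nonneg z) hz

lemma norm_ofReal_mul_le {c : ℝ} (hc : 0 ≤ c) {w : ℂ} (hw : ‖w‖ ≤ 1) : ‖(c : ℂ) * w‖ ≤ c := by
  rw [norm_mul, norm_real, Real.norm_of_nonneg hc]
  exact mul_le_of_le_one_right hc hw

lemma norm_tsum_ofReal_mul_le {c : ι → ℝ} (hc : Summable c) (hc0 : ∀ i, 0 ≤ c i) {w : ι → ℂ}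
    (hw : ∀ i, ‖w i‖ ≤ 1) : ‖∑' i, (c i : ℂ) * w i‖ ≤ ∑' i, c i :=
  tsum_of_norm_bounded hc.hasSum fun i => norm_ofReal_mul_le (hc0 i) (hw i)

lemma re_tsum_ofReal_mul_one_sub_nonneg {c : ι → ℝ} (hc0 : ∀ i, 0 ≤ c i) {w : ι → ℂ}
    (hw : ∀ i, ‖w i‖ ≤ 1) : 0 ≤ (∑' i, (c i : ℂ) * (1 - w i)).re := by
  by_cases hs : Summable fun i => (c i : ℂ) * (1 - w i)
  · rw [re_tsum hs]
    exact tsum_nonneg fun i => by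
      rw [re_ofReal_mul, sub_re, one_re]
      exact mul_nonneg (hc0 i) (sub_nonneg.2 ((re_le_norm _).trans (hw i)))
  · rw [tsum_eq_zero_of_not_summable hs, zero_re]

lemma differentiableOn_tsum_mul_pow {c : ι → ℂ} {u : ι → ℝ} (hu : Summable u)
    (hcu : ∀ i, ‖c i‖ ≤ u i) (m : ι → ℕ) :
    DifferentiableOn ℂ (fun y => ∑' i, c i * y ^ m i) (ball 0 1) :=
  differentiableOn_tsum_of_summable_norm hu (fun i => (differentiableOn_pow _).const_mul _)
    isOpen_ball fun i y hy => by
      rw [norm_mul]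
      exact (mul_le_of_le_one_right (norm_nonneg _)
        (norm_pow_le_one (mem_ball_zero_iff.1 hy).le _)).trans (hcu i)

noncomputable def rateSeries (q : ℕ × ℕ → ℝ) (q0 qt : ℕ → ℝ) (x y : ℂ) : ℂ :=
  (∑' p : ℕ × ℕ, (q p : ℂ) * x ^ (p.1 + 1) * y ^ (p.2 + 1))
    + (∑' j : ℕ, (q0 j : ℂ) * y ^ (j + 1)) + ∑' i : ℕ, (qt i : ℂ) * x ^ i

variable {q : ℕ × ℕ → ℝ} {q0 qt : ℕ → ℝ} {x : ℂ}

lemma norm_rateSeries_le (hq : Summable q) (hq0 : Summable q0) (hqt : Summable qt)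
    (hqnn : ∀ p, 0 ≤ q p) (hq0nn : ∀ j, 0 ≤ q0 j) (hqtnn : ∀ i, 0 ≤ qt i) (hx : ‖x‖ ≤ 1)
    {y : ℂ} (hy : ‖y‖ ≤ 1) :
    ‖rateSeries q q0 qt x y‖ ≤ (∑' p : ℕ × ℕ, q p) + (∑' j : ℕ, q0 j) + ∑' i : ℕ, qt i := by
  simp only [rateSeries, mul_assoc]
  refine norm_add₃_le.trans (add_le_add_three (norm_tsum_ofReal_mul_le hq hqnn fun p => ?_)
    (norm_tsum_ofReal_mul_le hq0 hq0nn fun j => norm_pow_le_one hy (j + 1))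
    (norm_tsum_ofReal_mul_le hqt hqtnn (norm_pow_le_one hx)))
  rw [norm_mul]
  exact mul_le_one₀ (norm_pow_le_one hx _) (norm_nonneg _) (norm_pow_le_one hy _)

lemma differentiableOn_rateSeries (hq : Summable q) (hq0 : Summable q0) (hqnn : ∀ p, 0 ≤ q p)
    (hq0nn : ∀ j, 0 ≤ q0 j) (hx : ‖x‖ ≤ 1) :
    DifferentiableOn ℂ (rateSeries q q0 qt x) (ball 0 1) := by
  have h1 := differentiableOn_tsum_mul_pow hq
    (fun p => norm_ofReal_mul_le (hqnn p) (norm_pow_le_one hx (p.1 + 1))) (fun p => p.2 + 1)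
  have h2 := differentiableOn_tsum_mul_pow hq0
    (fun j => ((norm_real (q0 j)).trans (Real.norm_of_nonneg (hq0nn j))).le) (fun j => j + 1)
  exact ((h1.add h2).add_const _).congr fun y _ => rfl

end RateSeries

theorem stmt_5_general (θ : ℝ) (hθ : 0 < θ)
    (q : ℕ × ℕ → ℝ) (q0 qr qt : ℕ → ℝ)
    (hq : Summable q) (hq0 : Summable q0) (hqt : Summable qt)
    (hqnn : ∀ p, 0 ≤ q p) (hq0nn : ∀ j, 0 ≤ q0 j)
    (hqrnn : ∀ i, 0 ≤ qr i) (hqtnn : ∀ i, 0 ≤ qt i)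
    (S : ℝ) (hS : S = (∑' p : ℕ × ℕ, q p) + (∑' j : ℕ, q0 j) + ∑' i : ℕ, qt i)
    (f g : ℂ → ℂ → ℂ)
    (hf : ∀ x y, f x y
      = y * ((θ : ℂ) + (∑' i : ℕ, (qr i : ℂ) * (1 - x ^ (i + 1))) + (S : ℂ)))
    (hg : ∀ x y, g x y
      = (∑' p : ℕ × ℕ, (q p : ℂ) * x ^ (p.1 + 1) * y ^ (p.2 + 1))
        + (∑' j : ℕ, (q0 j : ℂ) * y ^ (j + 1)) + ∑' i : ℕ, (qt i : ℂ) * x ^ i)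
    (x : ℂ) (hx : ‖x‖ = 1) :
    ∃! y : ℂ, ‖y‖ < 1 ∧ f x y = g x y := by
  have hS0 : 0 ≤ S :=
    hS ▸ add_nonneg (add_nonneg (tsum_nonneg hqnn) (tsum_nonneg hq0nn)) (tsum_nonneg hqtnn)
  set C : ℂ := (θ : ℂ) + (∑' i : ℕ, (qr i : ℂ) * (1 - x ^ (i + 1))) + (S : ℂ)
  have hC : θ + S ≤ ‖C‖ := by
    have := re_tsum_ofReal_mul_one_sub_nonneg hqrnn fun i => norm_pow_le_one hx.le (i + 1)
    refine le_trans ?_ (re_le_norm C)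
    simp only [C, add_re, ofReal_re]
    linarith
  have hC0 : C ≠ 0 := norm_pos_iff.1 (by linarith)
  have hg' : g x = rateSeries q q0 qt x := funext (hg x)
  have hfg (y : ℂ) : f x y = g x y ↔ rateSeries q q0 qt x y / C = y := by
    rw [hf, hg', div_eq_iff hC0, eq_comm]
  simp only [hfg]
  refine existsUnique_fixedPoint_of_mapsTo_closedBall (s := S / (θ + S))
    ((div_lt_one (by linarith)).2 (by linarith))
    ((differentiableOn_rateSeries hq hq0 hqnn hq0nn hx.le).div_const C) fun y hy => ?_
  rw [mem_closedBall_zero_iff, norm_div]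
  exact div_le_div₀ hS0 (hS ▸ norm_rateSeries_le hq hq0 hqt hqnn hq0nn hqtnn hx.le
    (mem_ball_zero_iff.1 hy).le) (by linarith) hC

/-- for every `|x| = 1` with `x ≠ 1`, the function
`y ↦ G_0(x,y) = f(x,y) − g(x,y)` has exactly one zero in the open unit disc:
there is a unique `y` with `|y| < 1` and `f(x,y) = g(x,y)`.
(Same encoding of the rate families as in Statement 4.) -/
theorem stmt_5 (θ : ℝ) (hθ : 0 < θ)
    (q : ℕ × ℕ → ℝ) (q0 qr qt : ℕ → ℝ)
    (hq : Summable q) (hq0 : Summable q0) (hqr : Summable qr) (hqt : Summable qt)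
    (hqnn : ∀ p, 0 ≤ q p) (hq0nn : ∀ j, 0 ≤ q0 j)
    (hqrnn : ∀ i, 0 ≤ qr i) (hqtnn : ∀ i, 0 ≤ qt i)
    (S : ℝ) (hS : S = (∑' p : ℕ × ℕ, q p) + (∑' j : ℕ, q0 j) + ∑' i : ℕ, qt i)
    (f g : ℂ → ℂ → ℂ)
    (hf : ∀ x y, f x y
      = y * ((θ : ℂ) + (∑' i : ℕ, (qr i : ℂ) * (1 - x ^ (i + 1))) + (S : ℂ)))
    (hg : ∀ x y, g x y
      = (∑' p : ℕ × ℕ, (q p : ℂ) * x ^ (p.1 + 1) * y ^ (p.2 + 1))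
        + (∑' j : ℕ, (q0 j : ℂ) * y ^ (j + 1)) + ∑' i : ℕ, (qt i : ℂ) * x ^ i)
    (x : ℂ) (hx : ‖x‖ = 1) (hx1 : x ≠ 1) :
    ∃! y : ℂ, ‖y‖ < 1 ∧ f x y = g x y :=
  stmt_5_general θ hθ q q0 qr qt hq hq0 hqt hqnn hq0nn hqrnn hqtnn S hS f g hf hg x hx
end

section
/- Define R(x,y) = xy·D_0(x,y) + y[q_{−1,0}(x − 1) + q_{−1,1}(x − y)] + x[q_{0,−1}(y − 1) + q_{1,−1}(y − x)]. Then for all complex g, s with |g| ≤ 1 and |s| = 1 one has the factorization R(gs, gs^{−1}) = g·[g·Δ(g,s) − (q_{−1,0} s^{−1} + q_{0,−1} s)], and for each s with |s| = 1 there exists a unique complex g with |g| < 1 satisfying g·Δ(g,s) = q_{−1,0} s^{−1} + q_{0,−1} s. Consequently, the zeros of g ↦ R(gs, gs^{−1}) in the open unit disc |g| < 1 are exactly g = 0 together with this unique solution. -/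
/-!
For `s ≠ 0` the factorization is a polynomial identity, so everything reduces to counting the
roots in the unit disc of the cubic `P(g) = g Δ(g,s) - (q_{−1,0} s⁻¹ + q_{0,−1} s)`. On the unit
circle `P(z)/z` is `θ` plus nonnegative rates times numbers `1 - w` with `‖w‖ = 1`, so its real
part is at least `θ > 0`. Then `log (P(z)/z)` is a primitive of its logarithmic derivative along
the circle, so `∮ P'/P = ∮ dz/z = 2πi`; since `P'/P = Σ 1/(z - ρ)` over the roots `ρ` of `P`, the
same integral is `2πi` times the number of roots in the disc, which is therefore one.
-/

open Complex Metric Polynomial Real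

namespace circleIntegral

theorem integral_sub_inv_of_notMem_closedBall {c w : ℂ} {R : ℝ} (hR : 0 ≤ R)
    (hw : w ∉ closedBall c R) : (∮ z in C(c, R), (z - w)⁻¹) = 0 := by
  refine DiffContOnCl.circleIntegral_eq_zero hR (DifferentiableOn.diffContOnCl ?_)
  refine ((differentiableOn_id.sub_const w).inv fun z hz => sub_ne_zero.2 ?_).mono
    closure_ball_subset_closedBall
  rintro rfl
  exact hw hz

theorem integral_multiset_sum_sub_inv {c : ℂ} {R : ℝ} (hR : 0 ≤ R) (M : Multiset ℂ)
    (hM : ∀ w ∈ M, w ∉ sphere c R) :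
    (∮ z in C(c, R), (M.map fun w => (z - w)⁻¹).sum)
      = (M.filter fun w => dist w c < R).card * (2 * π * I) := by
  induction M using Multiset.induction_on with
  | empty => simp [circleIntegral]
  | cons a M ih =>
    rw [Multiset.forall_mem_cons] at hM
    have hsum : CircleIntegrable (fun z => (M.map fun w => (z - w)⁻¹).sum) c R := by
      refine ContinuousOn.circleIntegrable hR (continuousOn_multiset_sum _ ?_)
      intro w hw
      refine (continuousOn_id.sub continuousOn_const).inv₀ fun z hz h => hM.2 w hw ?_
      obtain rfl : z = w := sub_eq_zero.1 h
      exact hz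
    simp only [Multiset.map_cons, Multiset.sum_cons]
    have ha : CircleIntegrable (fun z => (z - a)⁻¹) c R :=
      circleIntegrable_sub_inv_iff.2 (.inr (by rw [abs_of_nonneg hR]; exact hM.1))
    rw [integral_add ha hsum, ih hM.2]
    by_cases hin : dist a c < R
    · rw [integral_sub_inv_of_mem_ball hin, Multiset.filter_cons_of_pos M hin, Multiset.card_cons]
      push_cast; ring
    · have hout : a ∉ closedBall c R := fun h => hM.1 ((mem_closedBall.1 h).eq_of_not_lt hin)
      rw [integral_sub_inv_of_notMem_closedBall hR hout, Multiset.filter_cons_of_neg M hin,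
        zero_add]

end circleIntegral

theorem circleIntegral_logDeriv_eq_zero {f : ℂ → ℂ} {c : ℂ} {R : ℝ} (hR : 0 ≤ R)
    (hf : ∀ z ∈ sphere c R, DifferentiableAt ℂ f z ∧ f z ∈ slitPlane) :
    (∮ z in C(c, R), logDeriv f z) = 0 :=
  circleIntegral.integral_eq_zero_of_hasDerivWithinAt hR fun z hz =>
    ((hf z hz).1.hasDerivAt.clog (hf z hz).2).hasDerivWithinAt

namespace Polynomial

theorem circleIntegral_eval_derivative_div_eval {P : ℂ[X]} {c : ℂ} {R : ℝ} (hR : 0 ≤ R)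
    (hP : ∀ z ∈ sphere c R, P.eval z ≠ 0) :
    (∮ z in C(c, R), P.derivative.eval z / P.eval z)
      = (P.roots.filter fun w => dist w c < R).card * (2 * π * I) := by
  rw [circleIntegral.integral_congr hR fun z hz =>
    (IsAlgClosed.splits P).eval_derivative_div_eval_of_ne_zero (hP z hz)]
  simp only [one_div]
  exact circleIntegral.integral_multiset_sum_sub_inv hR _ fun w hw hws =>
    hP w hws (mem_roots'.1 hw).2

theorem card_roots_filter_dist_lt_of_slitPlane {P : ℂ[X]} {c : ℂ} {R : ℝ} (hR : 0 < R) (n : ℕ)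
    (hP : ∀ z ∈ sphere c R, P.eval z / (z - c) ^ n ∈ slitPlane) :
    (P.roots.filter fun w => dist w c < R).card = n := by
  have hc : ∀ z ∈ sphere c R, z - c ≠ 0 := fun z hz =>
    sub_ne_zero.2 (ne_of_mem_sphere hz hR.ne')
  have hPz : ∀ z ∈ sphere c R, P.eval z ≠ 0 := fun z hz h =>
    slitPlane_ne_zero (hP z hz) (by rw [h, zero_div])
  have hlogDeriv : ∀ z ∈ sphere c R, logDeriv (fun z => P.eval z / (z - c) ^ n) z
      = P.derivative.eval z / P.eval z - n * (z - c)⁻¹ := by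
    intro z hz
    rw [logDeriv_div (f := fun z => P.eval z) (g := fun z => (z - c) ^ n) z (hPz z hz)
        (pow_ne_zero _ (hc z hz)) P.differentiableAt (by fun_prop),
      logDeriv_fun_pow (by fun_prop), logDeriv_apply, logDeriv_apply, Polynomial.deriv]
    simp [div_eq_mul_inv]
  have hwinding := circleIntegral_logDeriv_eq_zero (f := fun z => P.eval z / (z - c) ^ n) hR.le
    fun z hz => ⟨P.differentiableAt.fun_div (by fun_prop) (pow_ne_zero _ (hc z hz)), hP z hz⟩
  rw [circleIntegral.integral_congr hR.le hlogDeriv, circleIntegral.integral_sub,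
    circleIntegral.integral_const_mul, circleIntegral.integral_sub_center_inv _ hR.ne',
    circleIntegral_eval_derivative_div_eval hR.le hPz, sub_eq_zero] at hwinding
  · exact_mod_cast mul_right_cancel₀ two_pi_I_ne_zero hwinding
  · exact (P.derivative.continuous.continuousOn.div P.continuous.continuousOn hPz).circleIntegrable
      hR.le
  · exact ContinuousOn.circleIntegrable hR.le <|
      continuousOn_const.mul ((continuousOn_id.sub continuousOn_const).inv₀ hc)

theorem existsUnique_mem_ball_isRoot_of_slitPlane {P : ℂ[X]} {c : ℂ} {R : ℝ} (hR : 0 < R)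
    (hP : ∀ z ∈ sphere c R, P.eval z / (z - c) ∈ slitPlane) :
    ∃! z, z ∈ ball c R ∧ P.IsRoot z := by
  obtain ⟨a, ha⟩ := Multiset.card_eq_one.1 <|
    card_roots_filter_dist_lt_of_slitPlane hR 1 (by simpa using hP)
  obtain ⟨z₀, hz₀⟩ := (NormedSpace.sphere_nonempty (x := c)).2 hR.le
  have hP0 : P ≠ 0 := fun h => slitPlane_ne_zero (hP z₀ hz₀) (by simp [h])
  have hmem : ∀ z, z ∈ P.roots.filter (fun w => dist w c < R) ↔ z ∈ ball c R ∧ P.IsRoot z := by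
    simp [mem_roots hP0, and_comm]
  refine ⟨a, (hmem a).1 (ha ▸ Multiset.mem_singleton_self a), fun z hz => ?_⟩
  simpa [ha] using (hmem z).2 hz

end Polynomial

theorem Complex.le_re_add_sum_mul_one_sub {ι : Type*} (s : Finset ι) (θ : ℝ) {q : ι → ℝ}
    {w : ι → ℂ} (hq : ∀ i ∈ s, 0 ≤ q i) (hw : ∀ i ∈ s, ‖w i‖ ≤ 1) :
    θ ≤ ((θ : ℂ) + ∑ i ∈ s, (q i : ℂ) * (1 - w i)).re := by
  simp only [add_re, ofReal_re, re_sum, re_ofReal_mul, sub_re, one_re]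
  refine le_add_of_nonneg_right (Finset.sum_nonneg fun i hi => mul_nonneg (hq i hi) ?_)
  linarith [(re_le_norm (w i)).trans (hw i hi)]

/-- with `R(x,y) = xy·D₀(x,y) + y[q_{−1,0}(x−1)+q_{−1,1}(x−y)]
+ x[q_{0,−1}(y−1)+q_{1,−1}(y−x)]`, one has for `|g| ≤ 1`, `|s| = 1` the factorization
`R(gs, gs⁻¹) = g(g·Δ(g,s) − (q_{−1,0}s⁻¹ + q_{0,−1}s))`; for each `|s| = 1` there is a
unique `|g| < 1` with `g·Δ(g,s) = q_{−1,0}s⁻¹ + q_{0,−1}s`; and the zeros of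
`g ↦ R(gs,gs⁻¹)` in `|g| < 1` are exactly `g = 0` together with this unique solution. -/
theorem stmt_8 (q01 q10 q11 qm10 qm11 q0m1 q1m1 θ : ℝ)
    (h01 : 0 ≤ q01) (h10 : 0 ≤ q10) (h11 : 0 ≤ q11)
    (hm10 : 0 ≤ qm10) (hm11 : 0 ≤ qm11) (h0m1 : 0 ≤ q0m1) (h1m1 : 0 ≤ q1m1)
    (hθ : 0 < θ)
    (D0 : ℂ → ℂ → ℂ)
    (hD0 : ∀ x y, D0 x y
      = (q10 : ℂ) * (1 - x) + (q01 : ℂ) * (1 - y) + (q11 : ℂ) * (1 - x * y) + (θ : ℂ))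
    (Δ : ℂ → ℂ → ℂ)
    (hΔ : ∀ g s, Δ g s = D0 (g * s) (g * s⁻¹) + (qm10 : ℂ) + (q0m1 : ℂ)
      + (qm11 : ℂ) * (1 - (s⁻¹) ^ 2) + (q1m1 : ℂ) * (1 - s ^ 2))
    (R : ℂ → ℂ → ℂ)
    (hR : ∀ x y, R x y = x * y * D0 x y
      + y * ((qm10 : ℂ) * (x - 1) + (qm11 : ℂ) * (x - y))
      + x * ((q0m1 : ℂ) * (y - 1) + (q1m1 : ℂ) * (y - x))) :
    (∀ g s : ℂ, ‖g‖ ≤ 1 → ‖s‖ = 1 →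
      R (g * s) (g * s⁻¹) = g * (g * Δ g s - ((qm10 : ℂ) * s⁻¹ + (q0m1 : ℂ) * s))) ∧
    (∀ s : ℂ, ‖s‖ = 1 →
      ∃! g : ℂ, ‖g‖ < 1 ∧ g * Δ g s = (qm10 : ℂ) * s⁻¹ + (q0m1 : ℂ) * s) ∧
    (∀ g s : ℂ, ‖g‖ < 1 → ‖s‖ = 1 →
      (R (g * s) (g * s⁻¹) = 0 ↔
        g = 0 ∨ g * Δ g s = (qm10 : ℂ) * s⁻¹ + (q0m1 : ℂ) * s)) := by
  have hne : ∀ s : ℂ, ‖s‖ = 1 → s ≠ 0 := fun s hs => norm_ne_zero_iff.1 (hs ▸ one_ne_zero)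
  have factor : ∀ g s : ℂ, s ≠ 0 →
      R (g * s) (g * s⁻¹) = g * (g * Δ g s - ((qm10 : ℂ) * s⁻¹ + (q0m1 : ℂ) * s)) := by
    intro g s hs
    rw [hR, hΔ, hD0]
    field_simp
    ring
  refine ⟨fun g s _ hs => factor g s (hne s hs), fun s hs => ?_,
    fun g s _ hs => by rw [factor g s (hne s hs), mul_eq_zero, sub_eq_zero]⟩
  have hs0 := hne s hs
  let P : ℂ[X] := X * (C ((q10 + q01 + q11 + θ + qm10 + q0m1 : ℂ) + (qm11 : ℂ) * (1 - (s⁻¹) ^ 2)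
      + (q1m1 : ℂ) * (1 - s ^ 2)) - C ((q10 : ℂ) * s + (q01 : ℂ) * s⁻¹) * X - C (q11 : ℂ) * X ^ 2)
    - C ((qm10 : ℂ) * s⁻¹ + (q0m1 : ℂ) * s)
  have hP : ∀ g, P.eval g = g * Δ g s - ((qm10 : ℂ) * s⁻¹ + (q0m1 : ℂ) * s) := by
    intro g
    simp only [P, eval_sub, eval_mul, eval_X, eval_C, eval_pow, hΔ, hD0]
    field_simp
    ring
  have hquotient : ∀ z : ℂ, z ≠ 0 → P.eval z / z = θ + ∑ i : Fin 7,
      (![q10, q01, q11, qm10, q0m1, qm11, q1m1] i : ℂ) *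
        (1 - ![z * s, z * s⁻¹, z ^ 2, (z * s)⁻¹, s * z⁻¹, (s⁻¹) ^ 2, s ^ 2] i) := by
    intro z hz
    rw [hP, hΔ, hD0]
    simp only [Fin.sum_univ_succ, Fin.sum_univ_zero, Matrix.cons_val_zero, Matrix.cons_val_succ]
    field_simp
    ring
  have hroot := existsUnique_mem_ball_isRoot_of_slitPlane one_pos fun z hz => by
    have hz1 : ‖z‖ = 1 := mem_sphere_zero_iff_norm.1 hz
    rw [sub_zero, hquotient z (hne z hz1)]
    refine mem_slitPlane_iff.2 (.inl (hθ.trans_le (le_re_add_sum_mul_one_sub _ θ ?_ ?_)))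
    · intro i _; fin_cases i <;> assumption
    · intro i _; fin_cases i <;> simp [hz1, hs]
  simpa [IsRoot, hP, sub_eq_zero, mem_ball_zero_iff] using hroot
end

section
/- Let D̄ be the closed unit disc in ℂ. Let G, G₁₀, G₀₀ : D̄×D̄ → ℂ and Y : D̄ → D̄ satisfy G(x, Y(x)) = 0 and G₁₀(x, Y(x)) ≠ 0 for all x ∈ D̄. Let V_m : D̄×D̄ → ℂ (m = 0, 1, 2, …) satisfy V_m(0,0) = 0 for all m ≥ 1, and suppose that for every m ≥ 0 and all (x,y) ∈ D̄×D̄: G(x,y)·V_m(x,y) = G₁₀(x,y)·[V_m(x,0) + P_{m−1}(x,y)] + G₀₀(x,y)·V_m(0,0), where P_m(x,y) = V_m(x,y) − V_m(x,0) − V_m(0,y) + V_m(0,0) and P_{−1} ≡ 0. Then: (i) for every m ≥ 0 and x ∈ D̄, G₁₀(x,Y(x))·V_m(x,0) = −G₀₀(x,Y(x))·V_m(0,0) − G₁₀(x,Y(x))·P_{m−1}(x,Y(x)); (ii) for every m ≥ 1 and (x,y) ∈ D̄×D̄, G(x,y)·V_m(x,y) = G₁₀(x,y)·Q_{m−1}(x,y),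 where Q_m(x,y) = V_m(x,y) − V_m(x,Y(x)) − V_m(0,y) + V_m(0,Y(x)); and (iii) for all (x,y) ∈ D̄×D̄, G(x,y)·G₁₀(x,Y(x))·V_0(x,y) = [G₀₀(x,y)·G₁₀(x,Y(x)) − G₀₀(x,Y(x))·G₁₀(x,y)]·V_0(0,0). -/
/-! Kernel method: at `y = Y(x)` the left side `G·V_m` of the functional equation vanishes,
which is (i). For `m ≥ 1` we have `V_m(0,0) = 0`, so (i) and `G₁₀(x,Y(x)) ≠ 0` give
`V_m(x,0) = −P_{m−1}(x,Y(x))`; put back into the functional equation this leaves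
`G₁₀·(P_{m−1}(x,y) − P_{m−1}(x,Y(x)))`, and that difference of mixed differences is
`Q_{m−1}(x,y)`. For `m = 0`, eliminating `V₀(x,0)` between (i) and the functional equation
gives (iii). -/

/-- The paper's `P_m x y` and `Q_m x y` are `rectDiff (V m) 0 0 x y` and `rectDiff (V m) 0 (Y x) x y`. -/
def rectDiff {α β A : Type*} [AddCommGroup A] (f : α → β → A) (x₀ : α) (y₀ : β) (x : α) (y : β) :
    A :=
  f x y - f x y₀ - f x₀ y + f x₀ y₀

theorem rectDiff_sub_rectDiff {α β A : Type*} [AddCommGroup A] (f : α → β → A) (x₀ : α)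
    (y₀ b : β) (x : α) (y : β) :
    rectDiff f x₀ y₀ x y - rectDiff f x₀ y₀ x b = rectDiff f x₀ b x y := by
  unfold rectDiff
  abel

section KernelElimination

variable {R : Type*} [CommRing R]

theorem mul_eq_mul_sub_of_mul_eq_neg_mul [NoZeroDivisors R] {g g₁₀ g₁₀' v w p p' : R}
    (hfe : g * v = g₁₀ * (w + p)) (hroot : g₁₀' * w = -(g₁₀' * p')) (hne : g₁₀' ≠ 0) :
    g * v = g₁₀ * (p - p') := by
  have hw : w = -p' := mul_left_cancel₀ hne (by rw [hroot, mul_neg])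
  rw [hfe, hw]
  ring

theorem mul_mul_eq_sub_mul_of_mul_eq_neg {g g₁₀ g₀₀ g₁₀' g₀₀' v w c : R}
    (hfe : g * v = g₁₀ * w + g₀₀ * c) (hroot : g₁₀' * w = -(g₀₀' * c)) :
    g * (g₁₀' * v) = (g₀₀ * g₁₀' - g₀₀' * g₁₀) * c := by
  linear_combination g₁₀' * hfe + g₁₀ * hroot

end KernelElimination

/-- the algebraic core of the power series approximation theorem.
With `G(x,Y(x)) = 0`, `G₁₀(x,Y(x)) ≠ 0`, `V_m(0,0) = 0` for `m ≥ 1`, and the functional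
equations `G·V_m = G₁₀·(V_m(·,0) + P_{m−1}) + G₀₀·V_m(0,0)` on the closed bidisc
(`P_{−1} ≡ 0`), one gets: (i) `G₁₀(x,Y(x))V_m(x,0) = −G₀₀(x,Y(x))V_m(0,0)
− G₁₀(x,Y(x))P_{m−1}(x,Y(x))`; (ii) for `m ≥ 1`, `G·V_m = G₁₀·Q_{m−1}`;
(iii) `G·G₁₀(x,Y(x))·V₀ = [G₀₀·G₁₀(x,Y(x)) − G₀₀(x,Y(x))·G₁₀]·V₀(0,0)`. -/
theorem stmt_10
    (G G10 G00 : ℂ → ℂ → ℂ) (Y : ℂ → ℂ)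
    (hY : ∀ x : ℂ, ‖x‖ ≤ 1 → ‖Y x‖ ≤ 1)
    (hGY : ∀ x : ℂ, ‖x‖ ≤ 1 → G x (Y x) = 0)
    (hG10Y : ∀ x : ℂ, ‖x‖ ≤ 1 → G10 x (Y x) ≠ 0)
    (V : ℕ → ℂ → ℂ → ℂ)
    (hV00 : ∀ m : ℕ, 1 ≤ m → V m 0 0 = 0)
    (P : ℕ → ℂ → ℂ → ℂ)
    (hP : ∀ m x y, P m x y = V m x y - V m x 0 - V m 0 y + V m 0 0)
    (Q : ℕ → ℂ → ℂ → ℂ)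
    (hQ : ∀ m x y, Q m x y = V m x y - V m x (Y x) - V m 0 y + V m 0 (Y x))
    (hfe : ∀ m : ℕ, ∀ x y : ℂ, ‖x‖ ≤ 1 → ‖y‖ ≤ 1 →
      G x y * V m x y
        = G10 x y * (V m x 0 + (if m = 0 then 0 else P (m - 1) x y))
          + G00 x y * V m 0 0) :
    (∀ m : ℕ, ∀ x : ℂ, ‖x‖ ≤ 1 →
      G10 x (Y x) * V m x 0
        = -(G00 x (Y x) * V m 0 0)
          - G10 x (Y x) * (if m = 0 then 0 else P (m - 1) x (Y x))) ∧
    (∀ m : ℕ, 1 ≤ m → ∀ x y : ℂ, ‖x‖ ≤ 1 → ‖y‖ ≤ 1 →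
      G x y * V m x y = G10 x y * Q (m - 1) x y) ∧
    (∀ x y : ℂ, ‖x‖ ≤ 1 → ‖y‖ ≤ 1 →
      G x y * (G10 x (Y x) * V 0 x y)
        = (G00 x y * G10 x (Y x) - G00 x (Y x) * G10 x y) * V 0 0 0) := by
  have kernel : ∀ m x, ‖x‖ ≤ 1 → G10 x (Y x) * V m x 0
      = -(G00 x (Y x) * V m 0 0)
        - G10 x (Y x) * (if m = 0 then 0 else P (m - 1) x (Y x)) := by
    intro m x hx
    have h := hfe m x (Y x) hx (hY x hx)
    rw [hGY x hx] at h
    linear_combination -h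
  refine ⟨kernel, fun m hm x y hx hy => ?_, fun x y hx hy => ?_⟩
  · have hfe_m := hfe m x y hx hy
    have kernel_m := kernel m x hx
    simp only [if_neg (Nat.one_le_iff_ne_zero.mp hm), hV00 m hm, mul_zero, add_zero, neg_zero,
      zero_sub] at hfe_m kernel_m
    rw [mul_eq_mul_sub_of_mul_eq_neg_mul hfe_m kernel_m (hG10Y x hx), hP, hP, hQ]
    exact congrArg _ (rectDiff_sub_rectDiff (V (m - 1)) 0 0 (Y x) x y)
  · have hfe_0 := hfe 0 x y hx hy
    have kernel_0 := kernel 0 x hx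
    simp only [↓reduceIte, add_zero, mul_zero, sub_zero] at hfe_0 kernel_0
    exact mul_mul_eq_sub_mul_of_mul_eq_neg hfe_0 kernel_0
end

section
/- Let D̄ be the closed unit disc in ℂ. Let R, T, K, C, Π : D̄×D̄ → ℂ and Ỹ : D̄ → D̄ satisfy, for all x ∈ D̄: R(x,Ỹ(x))·T(x,Ỹ(x)) − x·Ỹ(x) = 0, K(x,Ỹ(x)) ≠ 0 and T(x,Ỹ(x)) ≠ 0. Suppose that for all (x,y) ∈ D̄×D̄: Π(x,y)·[R(x,y)T(x,y) − xy] = T(x,y)·[K(x,y)·Π(x,0) + C(x,y)·Π(0,0)]. Then for all (x,y) ∈ D̄×D̄: Π(x,y)·[xy − T(x,y)R(x,y)]·K(x,Ỹ(x)) = T(x,y)·[K(x,y)·C(x,Ỹ(x)) − K(x,Ỹ(x))·C(x,y)]·Π(0,0). -/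
/-!
Kernel method. At `y = Ỹ(x)` the kernel `R T − x y` vanishes, so the functional equation
forces `T · [K Π(x,0) + C Π(0,0)] = 0` there; as `T(x,Ỹ(x)) ≠ 0`, this expresses the unknown
boundary term `K(x,Ỹ(x)) Π(x,0)` through `Π(0,0)`. Multiplying the functional equation at a
general `(x,y)` by `K(x,Ỹ(x))` and substituting eliminates `Π(x,0)`.
-/

section KernelMethod

variable {α : Type*} [CommRing α] (R T K C P : α → α → α) (x y₀ y : α)

theorem boundary_term_eq_of_kernel_root [NoZeroDivisors α]
    (hroot : R x y₀ * T x y₀ - x * y₀ = 0) (hT : T x y₀ ≠ 0)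
    (hfe : P x y₀ * (R x y₀ * T x y₀ - x * y₀) = T x y₀ * (K x y₀ * P x 0 + C x y₀ * P 0 0)) :
    K x y₀ * P x 0 = -(C x y₀ * P 0 0) := by
  rw [hroot, mul_zero, eq_comm, mul_eq_zero] at hfe
  exact eq_neg_of_add_eq_zero_left (hfe.resolve_left hT)

theorem functional_eq_elim_boundary (hbd : K x y₀ * P x 0 = -(C x y₀ * P 0 0))
    (hfe : P x y * (R x y * T x y - x * y) = T x y * (K x y * P x 0 + C x y * P 0 0)) :
    P x y * (x * y - T x y * R x y) * K x y₀
      = T x y * (K x y * C x y₀ - K x y₀ * C x y) * P 0 0 := by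
  linear_combination (-K x y₀) * hfe - T x y * K x y * hbd

end KernelMethod

theorem stmt_11_general (R T K C Pgf : ℂ → ℂ → ℂ) (Yt : ℂ → ℂ)
    (hYt : ∀ x : ℂ, ‖x‖ ≤ 1 → ‖Yt x‖ ≤ 1)
    (hker : ∀ x : ℂ, ‖x‖ ≤ 1 → R x (Yt x) * T x (Yt x) - x * Yt x = 0)
    (hT : ∀ x : ℂ, ‖x‖ ≤ 1 → T x (Yt x) ≠ 0)
    (hfe : ∀ x y : ℂ, ‖x‖ ≤ 1 → ‖y‖ ≤ 1 →
      Pgf x y * (R x y * T x y - x * y)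
        = T x y * (K x y * Pgf x 0 + C x y * Pgf 0 0)) :
    ∀ x y : ℂ, ‖x‖ ≤ 1 → ‖y‖ ≤ 1 →
      Pgf x y * (x * y - T x y * R x y) * K x (Yt x)
        = T x y * (K x y * C x (Yt x) - K x (Yt x) * C x y) * Pgf 0 0 := by
  intro x y hx hy
  have hbd := boundary_term_eq_of_kernel_root R T K C Pgf x (Yt x) (hker x hx) (hT x hx)
    (hfe x (Yt x) hx (hYt x hx))
  exact functional_eq_elim_boundary R T K C Pgf x (Yt x) y hbd (hfe x y hx hy)

/-- the boundary case `w = 0` of the functional equation. If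
`R(x,Ỹ(x))T(x,Ỹ(x)) − x·Ỹ(x) = 0`, `K(x,Ỹ(x)) ≠ 0`, `T(x,Ỹ(x)) ≠ 0` on the closed disc,
and `Π(x,y)[R T − xy] = T[K·Π(x,0) + C·Π(0,0)]` on the closed bidisc, then
`Π(x,y)[xy − T R]·K(x,Ỹ(x)) = T·[K(x,y)C(x,Ỹ(x)) − K(x,Ỹ(x))C(x,y)]·Π(0,0)`. -/
theorem stmt_11 (R T K C Pgf : ℂ → ℂ → ℂ) (Yt : ℂ → ℂ)
    (hYt : ∀ x : ℂ, ‖x‖ ≤ 1 → ‖Yt x‖ ≤ 1)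
    (hker : ∀ x : ℂ, ‖x‖ ≤ 1 → R x (Yt x) * T x (Yt x) - x * Yt x = 0)
    (hK : ∀ x : ℂ, ‖x‖ ≤ 1 → K x (Yt x) ≠ 0)
    (hT : ∀ x : ℂ, ‖x‖ ≤ 1 → T x (Yt x) ≠ 0)
    (hfe : ∀ x y : ℂ, ‖x‖ ≤ 1 → ‖y‖ ≤ 1 →
      Pgf x y * (R x y * T x y - x * y)
        = T x y * (K x y * Pgf x 0 + C x y * Pgf 0 0)) :
    ∀ x y : ℂ, ‖x‖ ≤ 1 → ‖y‖ ≤ 1 →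
      Pgf x y * (x * y - T x y * R x y) * K x (Yt x)
        = T x y * (K x y * C x (Yt x) - K x (Yt x) * C x y) * Pgf 0 0 :=
  stmt_11_general R T K C Pgf Yt hYt hker hT hfe
end

section
/- Let N ≥ 2 be an integer, λ₀ > 0 and μ > 0 reals, and set ρ₀ = λ₀/μ. Define s_N = 0 and s_k = λ₀/(μ + λ₀·1_{k ≠ N−1} − μ·s_{k+1}) for k = N−1 down to 1. If complex numbers Π₁, …, Π_N satisfy Π_k = s_{k−1}·Π_{k−1} for k = 2,…,N, then Π_k = ρ₀^{k−1}·Π₁ for every k = 1,…,N. -/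
/-! The backward recursion for `s` is solved by the constant `λ₀/μ`: at `k = N - 1` the
indicator vanishes and `s N = 0`, and below that `λ₀/μ` is a fixed point of
`x ↦ λ₀ / (μ + λ₀ - μ x)`. Hence `Π` is a geometric sequence with ratio `ρ₀`. -/

theorem eq_pow_mul_of_eq_mul_pred {M : Type*} [Monoid M] (N : ℕ) (c : M) (f : ℕ → M)
    (hf : ∀ k, 2 ≤ k → k ≤ N → f k = c * f (k - 1)) :
    ∀ k, 1 ≤ k → k ≤ N → f k = c ^ (k - 1) * f 1 := by
  intro k hk1
  induction k, hk1 using Nat.le_induction with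
  | base => simp
  | succ k hk1 ih =>
    intro hkN
    rw [hf (k + 1) (by omega) hkN, Nat.add_sub_cancel, ih (by omega),
      ← mul_assoc, ← pow_succ', Nat.sub_add_cancel hk1]

theorem backward_recursion_eq_div (N : ℕ) (lam0 mu : ℝ) (hmu : mu ≠ 0)
    (s : ℕ → ℝ) (hsN : s N = 0)
    (hrec : ∀ k, 1 ≤ k → k ≤ N - 1 →
      s k = lam0 / (mu + (if k ≠ N - 1 then lam0 else 0) - mu * s (k + 1))) :
    ∀ k, 1 ≤ k → k ≤ N - 1 → s k = lam0 / mu := by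
  intro k hk1 hk
  induction hm : N - 1 - k generalizing k with
  | zero =>
    obtain rfl : k = N - 1 := by omega
    rw [hrec _ hk1 le_rfl, Nat.sub_add_cancel (by omega), hsN]
    simp
  | succ m ih =>
    rw [hrec k hk1 hk, if_pos (by omega), ih (k + 1) (by omega) (by omega) (by omega),
      mul_div_cancel₀ _ hmu, add_sub_cancel_right]

theorem stmt_16_general (N : ℕ) (lam0 mu : ℝ) (hmu : 0 < mu)
    (rho0 : ℝ) (hrho : rho0 = lam0 / mu)
    (s : ℕ → ℝ) (hsN : s N = 0)
    (hrec : ∀ k, 1 ≤ k → k ≤ N - 1 →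
      s k = lam0 / (mu + (if k ≠ N - 1 then lam0 else 0) - mu * s (k + 1)))
    (Pi : ℕ → ℂ)
    (hPi : ∀ k, 2 ≤ k → k ≤ N → Pi k = (s (k - 1) : ℂ) * Pi (k - 1)) :
    ∀ k, 1 ≤ k → k ≤ N → Pi k = (rho0 : ℂ) ^ (k - 1) * Pi 1 := by
  have hs := backward_recursion_eq_div N lam0 mu hmu.ne' s hsN hrec
  refine eq_pow_mul_of_eq_mul_pred N _ Pi fun k hk2 hkN => ?_
  rw [hPi k hk2 hkN, hs (k - 1) (by omega) (by omega), hrho]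

/-- with `ρ₀ = λ₀/μ`, the backward recursion `s_N = 0`,
`s_k = λ₀/(μ + λ₀·1_{k≠N−1} − μ s_{k+1})`, and `Π_k = s_{k−1}Π_{k−1}` for
`k = 2,…,N`, one has `Π_k = ρ₀^{k−1}Π₁` for every `k = 1,…,N`. -/
theorem stmt_16 (N : ℕ) (hN : 2 ≤ N) (lam0 mu : ℝ) (hlam : 0 < lam0) (hmu : 0 < mu)
    (rho0 : ℝ) (hrho : rho0 = lam0 / mu)
    (s : ℕ → ℝ) (hsN : s N = 0)
    (hrec : ∀ k, 1 ≤ k → k ≤ N - 1 →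
      s k = lam0 / (mu + (if k ≠ N - 1 then lam0 else 0) - mu * s (k + 1)))
    (Pi : ℕ → ℂ)
    (hPi : ∀ k, 2 ≤ k → k ≤ N → Pi k = (s (k - 1) : ℂ) * Pi (k - 1)) :
    ∀ k, 1 ≤ k → k ≤ N → Pi k = (rho0 : ℂ) ^ (k - 1) * Pi 1 :=
  stmt_16_general N lam0 mu hmu rho0 hrho s hsN hrec Pi hPi
end
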